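/- Let d ≥ 3 and let U ⊆ ℝ[x]_{≤d} (polynomials of degree at most d) be a d-dimensional subspace with 1 ∉ U. If dim(UU) = 2d − 1, then all elements of U have a common real root. -/

import Mathlib

/-!
Since `1 ∉ U` and `dim U = d`, `U` is a complement of the constants in `ℝ[x]_{≤d}`, so it contains
some `X^i - a_i` for every `i ≤ d`. Products of these are monic of every degree `2, …, 2d`, so
`UU + ℝ[x]_{≤1} = ℝ[x]_{≤2d}`, and `dim UU = 2d - 1` makes this sum direct. Writing
`X^m ≡ e_m X + c_m` modulo `UU`, the products `(X^i - a_i)(X^j - a_j) ∈ UU` give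
`e_{i+j} = a_i e_j + a_j e_i` and `c_{i+j} = a_i c_j + a_j c_i - a_i a_j`, which force `a_i = α^i`
with `α = a_1` once `d ≥ 3`. Then `p - p(α) ∈ U` for every `p ∈ U`, and `1 ∉ U` gives `p(α) = 0`.
-/

open Polynomial Module Submodule

namespace Submodule

section DivisionRing

variable {K V : Type*} [DivisionRing K] [AddCommGroup V] [Module K V]

theorem sup_eq_of_disjoint_of_finrank_le {s t u : Submodule K V} [FiniteDimensional K u]
    (hs : s ≤ u) (ht : t ≤ u) (hst : Disjoint s t)
    (hrank : finrank K u ≤ finrank K s + finrank K t) : s ⊔ t = u := by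
  have : FiniteDimensional K s := finiteDimensional_of_le hs
  have : FiniteDimensional K t := finiteDimensional_of_le ht
  refine eq_of_le_of_finrank_le (sup_le hs ht) ?_
  have := finrank_sup_add_finrank_inf_eq s t
  rw [hst.eq_bot, finrank_bot] at this
  omega

theorem disjoint_of_sup_eq_of_finrank_eq {s t u : Submodule K V} [FiniteDimensional K u]
    (h : s ⊔ t = u) (hrank : finrank K u = finrank K s + finrank K t) : Disjoint s t := by
  have : FiniteDimensional K s := finiteDimensional_of_le (h ▸ le_sup_left)
  have : FiniteDimensional K t := finiteDimensional_of_le (h ▸ le_sup_right)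
  have := finrank_sup_add_finrank_inf_eq s t
  rw [h] at this
  rw [disjoint_iff, ← finrank_eq_zero]
  omega

end DivisionRing

theorem span_setOf_mul_eq_mul {R A : Type*} [CommSemiring R] [Semiring A] [Algebra R A]
    (M N : Submodule R A) : span R {f : A | ∃ p ∈ M, ∃ q ∈ N, f = p * q} = M * N := by
  rw [mul_eq_span_mul_set]
  congr 1
  ext f
  simp [Set.mem_mul, eq_comm]

end Submodule

namespace Polynomial

theorem X_pow_mem_degreeLE {R : Type*} [Semiring R] {m n : ℕ} (h : m ≤ n) :
    (X ^ m : R[X]) ∈ degreeLE R n :=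
  mem_degreeLE.2 <| (degree_X_pow_le m).trans (by exact_mod_cast h)

theorem mul_le_degreeLE {R : Type*} [CommSemiring R] {M N : Submodule R R[X]} {m n : ℕ}
    (hM : M ≤ degreeLE R m) (hN : N ≤ degreeLE R n) : M * N ≤ degreeLE R (m + n : ℕ) :=
  mul_le.2 fun p hp q hq => mem_degreeLE.2 <| (degree_mul_le p q).trans <| by
    push_cast
    exact add_le_add (mem_degreeLE.1 (hM hp)) (mem_degreeLE.1 (hN hq))

section Ring

variable {R : Type*} [Ring R] {W : Submodule R R[X]}

theorem degreeLE_le_sup_degreeLE {k n : ℕ}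
    (hW : ∀ m, k < m → m ≤ n → ∃ p ∈ W, p.Monic ∧ p.natDegree = m) :
    degreeLE R n ≤ W ⊔ degreeLE R k := by
  induction n with
  | zero => exact le_sup_of_le_right (degreeLE_mono (by exact_mod_cast k.zero_le))
  | succ n ih =>
    rcases le_or_gt (n + 1) k with hnk | hkn
    · exact le_sup_of_le_right (degreeLE_mono (by exact_mod_cast hnk))
    obtain ⟨p, hpW, hp, hpdeg⟩ := hW (n + 1) hkn le_rfl
    intro q hq
    have hlow : q - q.coeff (n + 1) • p ∈ degreeLE R n := by
      rw [mem_degreeLE, degree_le_iff_coeff_zero]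
      intro m hm
      have hm : n + 1 ≤ m := by exact_mod_cast hm
      rw [coeff_sub, coeff_smul, smul_eq_mul]
      rcases hm.eq_or_lt with rfl | hm
      · rw [← hpdeg, hp.coeff_natDegree, mul_one, sub_self]
      · rw [coeff_eq_zero_of_degree_lt ((mem_degreeLE.1 hq).trans_lt (by exact_mod_cast hm)),
          coeff_eq_zero_of_natDegree_lt (by omega : p.natDegree < m), mul_zero, sub_zero]
    simpa using add_mem (ih (fun m hkm hmn => hW m hkm (by omega)) hlow)
      (mem_sup_left (W.smul_mem (q.coeff (n + 1)) hpW))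

theorem exists_sub_C_mem {p : R[X]} (hp : p ∈ W ⊔ degreeLE R (0 : ℕ)) :
    ∃ c : R, p - C c ∈ W := by
  obtain ⟨w, hw, q, hq, rfl⟩ := mem_sup.1 hp
  refine ⟨q.coeff 0, ?_⟩
  rwa [← eq_C_of_degree_le_zero (mem_degreeLE.1 hq), add_sub_cancel_right]

theorem exists_sub_C_mul_X_add_C_mem {p : R[X]} (hp : p ∈ W ⊔ degreeLE R (1 : ℕ)) :
    ∃ e c : R, p - (C e * X + C c) ∈ W := by
  obtain ⟨w, hw, q, hq, rfl⟩ := mem_sup.1 hp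
  refine ⟨q.coeff 1, q.coeff 0, ?_⟩
  rwa [← eq_X_add_C_of_degree_le_one (mem_degreeLE.1 hq), add_sub_cancel_right]

theorem eq_zero_of_C_mul_X_add_C_mem (hW : Disjoint W (degreeLE R (1 : ℕ))) {e c : R}
    (h : C e * X + C c ∈ W) : e = 0 ∧ c = 0 := by
  have h0 := disjoint_def.1 hW _ h
    (mem_degreeLE.2 (degree_linear_le.trans (by exact_mod_cast le_rfl)))
  exact ⟨by simpa using congr_arg (coeff · 1) h0, by simpa using congr_arg (coeff · 0) h0⟩

end Ring

section CommRing

variable {R : Type*} [CommRing R] {U W : Submodule R R[X]}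

theorem degreeLE_le_mul_self_sup [Nontrivial R] {d : ℕ} {a : ℕ → R}
    (ha : ∀ i ≤ d, X ^ i - C (a i) ∈ U) :
    degreeLE R (2 * d : ℕ) ≤ U * U ⊔ degreeLE R (1 : ℕ) := by
  refine degreeLE_le_sup_degreeLE fun m h1m hm => ?_
  obtain ⟨i, j, hi, hj, hi0, hj0, rfl⟩ : ∃ i j, i ≤ d ∧ j ≤ d ∧ i ≠ 0 ∧ j ≠ 0 ∧ m = i + j :=
    ⟨m - min (m - 1) d, min (m - 1) d, by omega, by omega, by omega, by omega, by omega⟩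
  have hmi := monic_X_pow_sub_C (a i) hi0
  have hmj := monic_X_pow_sub_C (a j) hj0
  exact ⟨_, mul_mem_mul (ha i hi) (ha j hj), hmi.mul hmj,
    by rw [hmi.natDegree_mul hmj, natDegree_X_pow_sub_C, natDegree_X_pow_sub_C]⟩

theorem remainders_add_of_mul_mem (hW : Disjoint W (degreeLE R (1 : ℕ))) {e c : ℕ → R}
    {i j : ℕ} {a b : R} (hce : ∀ m ∈ [i, j, i + j], X ^ m - (C (e m) * X + C (c m)) ∈ W)
    (hprod : (X ^ i - C a) * (X ^ j - C b) ∈ W) :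
    e (i + j) = a * e j + b * e i ∧ c (i + j) = a * c j + b * c i - a * b := by
  have hmem := W.sub_mem hprod <| W.sub_mem (W.sub_mem (hce (i + j) (by simp))
    (W.smul_mem a (hce j (by simp)))) (W.smul_mem b (hce i (by simp)))
  have hlin : (X ^ i - C a) * (X ^ j - C b) - (X ^ (i + j) - (C (e (i + j)) * X + C (c (i + j)))
      - a • (X ^ j - (C (e j) * X + C (c j))) - b • (X ^ i - (C (e i) * X + C (c i))))
      = C (e (i + j) - (a * e j + b * e i)) * X
        + C (c (i + j) - (a * c j + b * c i - a * b)) := by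
    simp only [smul_eq_C_mul, map_sub, map_add, map_mul]
    ring
  rw [hlin] at hmem
  obtain ⟨he, hc⟩ := eq_zero_of_C_mul_X_add_C_mem hW hmem
  exact ⟨sub_eq_zero.1 he, sub_eq_zero.1 hc⟩

end CommRing

section Field

variable {K : Type*} [Field K]

instance finiteDimensional_degreeLE (n : ℕ) : FiniteDimensional K (degreeLE K n) := by
  rw [← degreeLT_succ_eq_degreeLE]
  exact .equiv (degreeLTEquiv K (n + 1)).symm

theorem finrank_degreeLE (n : ℕ) : finrank K (degreeLE K n) = n + 1 := by
  rw [← degreeLT_succ_eq_degreeLE, (degreeLTEquiv K (n + 1)).finrank_eq, finrank_fin_fun]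

theorem disjoint_degreeLE_zero {U : Submodule K K[X]} (hone : (1 : K[X]) ∉ U) :
    Disjoint U (degreeLE K (0 : ℕ)) := by
  refine disjoint_def.2 fun p hpU hp0 => ?_
  rw [eq_C_of_degree_le_zero (mem_degreeLE.1 hp0)] at hpU ⊢
  rw [C_eq_zero]
  by_contra hc
  have h1 := U.smul_mem (p.coeff 0)⁻¹ hpU
  rw [smul_C, smul_eq_mul, inv_mul_cancel₀ hc, C_1] at h1
  exact hone h1

theorem eval_eq_zero_of_X_pow_sub_C_pow_mem {U : Submodule K K[X]} {d : ℕ} {α : K}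
    (hU : U ≤ degreeLE K d) (hone : (1 : K[X]) ∉ U)
    (hα : ∀ i, 1 ≤ i → i ≤ d → X ^ i - C (α ^ i) ∈ U) {p : K[X]} (hp : p ∈ U) :
    p.eval α = 0 := by
  classical
  let φ : K[X] →ₗ[K] K[X] := LinearMap.id - Algebra.linearMap K K[X] ∘ₗ leval α
  have hφ : degreeLE K d ≤ U.comap φ := by
    rw [degreeLE_eq_span_X_pow, span_le]
    intro f hf
    simp only [Finset.coe_image, Finset.coe_range, Set.mem_image, Set.mem_Iio] at hf
    obtain ⟨i, hi, rfl⟩ := hf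
    rcases Nat.eq_zero_or_pos i with rfl | hi0
    · simp [φ]
    · simpa [φ] using hα i hi0 (by omega)
  have hC : C (p.eval α) ∈ U := by simpa [φ] using U.sub_mem hp (hφ (hU hp))
  simpa using disjoint_def.1 (disjoint_degreeLE_zero hone) _ hC
    (mem_degreeLE.2 (degree_C_le.trans (by exact_mod_cast le_rfl)))

end Field

end Polynomial

theorem eq_pow_of_product_relations {R : Type*} [CommRing R] [IsReduced R] {d : ℕ} (hd : 3 ≤ d)
    {a c e : ℕ → R} (he1 : e 1 = 1) (hc1 : c 1 = 0)
    (hrel : ∀ i j, 1 ≤ i → i ≤ d → 1 ≤ j → j ≤ d →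
      e (i + j) = a i * e j + a j * e i ∧ c (i + j) = a i * c j + a j * c i - a i * a j) :
    ∀ n, 1 ≤ n → n ≤ d → a n = a 1 ^ n := by
  set α := a 1
  have he (j : ℕ) (h1 : 1 ≤ j) (hj : j ≤ d) : e (j + 1) = α * e j + a j := by
    rw [add_comm, (hrel 1 j le_rfl (by omega) h1 hj).1, he1, mul_one]
  have hc (j : ℕ) (h1 : 1 ≤ j) (hj : j ≤ d) : c (j + 1) = α * c j - α * a j := by
    rw [add_comm, (hrel 1 j le_rfl (by omega) h1 hj).2, hc1, mul_zero, add_zero]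
  have he2 : e 2 = 2 * α := by rw [he 1 le_rfl (by omega), he1]; ring
  have hc2 : c 2 = -α ^ 2 := by rw [hc 1 le_rfl (by omega), hc1]; ring
  have ha2 : a 2 = α ^ 2 := by
    have he3 : e 3 = α * e 2 + a 2 := he 2 (by omega) (by omega)
    have hc3 : c 3 = α * c 2 - α * a 2 := hc 2 (by omega) (by omega)
    have he4 : e 4 = α * e 3 + a 3 := he 3 (by omega) (by omega)
    have hc4 : c 4 = α * c 3 - α * a 3 := hc 3 (by omega) (by omega)
    obtain ⟨he22, hc22⟩ : e 4 = a 2 * e 2 + a 2 * e 2 ∧ c 4 = a 2 * c 2 + a 2 * c 2 - a 2 * a 2 :=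
      hrel 2 2 (by omega) (by omega) (by omega) (by omega)
    -- `s_k = c_k + α e_k` satisfies `s_{k+1} = α s_k`, so `s_4 = 2 a_2 s_2 - a_2²` reads
    -- `α⁴ = 2 a_2 α² - a_2²`.
    have hsq : (a 2 - α ^ 2) ^ 2 = 0 := by
      linear_combination hc22 + α * he22 - (hc4 + α * he4) - α * (hc3 + α * he3)
        + (2 * a 2 - α ^ 2) * (hc2 + α * he2)
    exact sub_eq_zero.1 (IsReduced.eq_zero _ ⟨2, hsq⟩)
  have hstep (n : ℕ) (h2 : 2 ≤ n) (hn : n + 1 ≤ d) : a (n + 1) = α * a n := by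
    have hrel2 : e (n + 2) = a 2 * e n + a n * e 2 := by
      rw [add_comm]
      exact (hrel 2 n (by omega) (by omega) (by omega) (by omega)).1
    -- compare `e_{n+2}` obtained from the splittings `1 + (n + 1)` and `2 + n`
    linear_combination -he (n + 1) (by omega) hn + hrel2 - α * he n (by omega) (by omega)
      + e n * ha2 + a n * he2
  intro n h1
  induction n, h1 using Nat.le_induction with
  | base => exact fun _ => (pow_one α).symm
  | succ n hn ih =>
    intro hnd
    rcases (show n = 1 ∨ 2 ≤ n by omega) with rfl | h2
    · exact ha2
    · rw [hstep n h2 hnd, ih (by omega), pow_succ, mul_comm]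

/-- Let `d ≥ 3` and let `U ⊆ ℝ[x]_{≤ d}` be a `d`-dimensional subspace with
`1 ∉ U`. If the span of all products `p * q` (`p, q ∈ U`) has dimension `2d - 1`, then the
elements of `U` have a common real root. -/
theorem common_root_of_min_product_dim
    (d : ℕ) (hd : 3 ≤ d) (U : Submodule ℝ (Polynomial ℝ))
    (hUle : U ≤ Polynomial.degreeLE ℝ (d : ℕ))
    (hdim : Module.finrank ℝ U = d)
    (hone : (1 : Polynomial ℝ) ∉ U)
    (hUU : Module.finrank ℝ
        (Submodule.span ℝ {f : Polynomial ℝ | ∃ p ∈ U, ∃ q ∈ U, f = p * q}) = 2 * d - 1) :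
    ∃ a : ℝ, ∀ p ∈ U, Polynomial.eval a p = 0 := by
  rw [span_setOf_mul_eq_mul] at hUU
  have hsup₀ : U ⊔ degreeLE ℝ (0 : ℕ) = degreeLE ℝ d :=
    sup_eq_of_disjoint_of_finrank_le hUle (degreeLE_mono (by exact_mod_cast d.zero_le))
      (disjoint_degreeLE_zero hone) (by rw [finrank_degreeLE, finrank_degreeLE, hdim])
  choose! a ha using fun i (hi : i ≤ d) => exists_sub_C_mem (hsup₀ ▸ X_pow_mem_degreeLE hi)
  have hsup₁ : U * U ⊔ degreeLE ℝ (1 : ℕ) = degreeLE ℝ (2 * d : ℕ) :=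
    le_antisymm (sup_le (two_mul d ▸ mul_le_degreeLE hUle hUle)
      (degreeLE_mono (by exact_mod_cast (by omega : 1 ≤ 2 * d)))) (degreeLE_le_mul_self_sup ha)
  have hdisj : Disjoint (U * U) (degreeLE ℝ (1 : ℕ)) :=
    disjoint_of_sup_eq_of_finrank_eq hsup₁ (by rw [finrank_degreeLE, finrank_degreeLE, hUU]; omega)
  choose! e c hce using fun m (hm : m ≤ 2 * d) =>
    exists_sub_C_mul_X_add_C_mem (hsup₁ ▸ X_pow_mem_degreeLE hm)
  obtain ⟨he1, hc1⟩ : e 1 = 1 ∧ c 1 = 0 := by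
    have h := eq_zero_of_C_mul_X_add_C_mem hdisj (e := 1 - e 1) (c := -c 1)
      (by convert hce 1 (by omega) using 1; simp only [map_sub, map_neg, map_one]; ring)
    exact ⟨(sub_eq_zero.1 h.1).symm, neg_eq_zero.1 h.2⟩
  have hpow := eq_pow_of_product_relations hd he1 hc1 fun i j _ hi _ hj =>
    remainders_add_of_mul_mem hdisj (fun m hm => hce m (by simp at hm; omega))
      (mul_mem_mul (ha i hi) (ha j hj))
  exact ⟨a 1, fun p hp => eval_eq_zero_of_X_pow_sub_C_pow_mem hUle hone
    (fun i h1 hi => hpow i h1 hi ▸ ha i hi) hp⟩
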